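/- arXiv:2510.23788 — 6 statements merged into one kernel-verified Lean document; each statement's English description precedes it below -/
import Mathlib

section
/- The polynomial q(z₁,z₂) = 4z₂ − z₁² is Γ-distinguished: its zero set Z(q) intersects 𝔾₂ (e.g. at (0,0)), and every point of Z(q) lying in the topological boundary of 𝔾₂ lies in the distinguished boundary bΓ = {(z₁+z₂, z₁z₂) : |z₁| = |z₂| = 1}. -/
/-! On Z(q) the symmetrisation (α + β, αβ) satisfies (α + β)² = 4αβ, i.e. (α - β)² = 0, so the point
is π(α, α). Such a point of Γ lies outside 𝔾₂ only when |α| = 1, and then it lies in bΓ. -/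

noncomputable section

def G2 : Set (ℂ × ℂ) :=
  {w | ∃ z₁ z₂ : ℂ, ‖z₁‖ < 1 ∧ ‖z₂‖ < 1 ∧ w = (z₁ + z₂, z₁ * z₂)}

def GammaSet : Set (ℂ × ℂ) :=
  {w | ∃ z₁ z₂ : ℂ, ‖z₁‖ ≤ 1 ∧ ‖z₂‖ ≤ 1 ∧ w = (z₁ + z₂, z₁ * z₂)}

def bGamma : Set (ℂ × ℂ) :=
  {w | ∃ z₁ z₂ : ℂ, ‖z₁‖ = 1 ∧ ‖z₂‖ = 1 ∧ w = (z₁ + z₂, z₁ * z₂)}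

/-- Zero set of a polynomial in two variables. -/
def Zset (p : MvPolynomial (Fin 2) ℂ) : Set (ℂ × ℂ) :=
  {w | MvPolynomial.eval ![w.1, w.2] p = 0}

/-- A polynomial is Γ-distinguished if its zero set meets 𝔾₂ and meets the
topological boundary of 𝔾₂ (= Γ \ 𝔾₂) only inside the distinguished boundary bΓ. -/
def GammaDistinguished (p : MvPolynomial (Fin 2) ℂ) : Prop :=
  (Zset p ∩ G2).Nonempty ∧ Zset p ∩ (GammaSet \ G2) ⊆ bGamma

open MvPolynomial

theorem eq_of_add_sq_eq_four_mul {R : Type*} [CommRing R] [IsReduced R] {α β : R}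
    (h : (α + β) ^ 2 = 4 * (α * β)) : α = β :=
  sub_eq_zero.mp <| eq_zero_of_pow_eq_zero (n := 2) <| by linear_combination h

theorem mem_Zset_four_X_one_sub_X_zero_sq_iff (w : ℂ × ℂ) :
    w ∈ Zset (4 * X 1 - X 0 ^ 2) ↔ w.1 ^ 2 = 4 * w.2 := by
  simp only [Zset, Set.mem_ofPred_eq, map_sub, map_mul, map_pow, map_ofNat, eval_X,
    Matrix.cons_val_zero, Matrix.cons_val_one]
  exact sub_eq_zero.trans eq_comm

theorem zero_mem_G2 : ((0 : ℂ), (0 : ℂ)) ∈ G2 :=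
  ⟨0, 0, by simp, by simp, by simp⟩

theorem mem_bGamma_of_diag_notMem_G2 {α : ℂ} (hα : ‖α‖ ≤ 1) (h : (α + α, α * α) ∉ G2) :
    (α + α, α * α) ∈ bGamma := by
  rcases hα.lt_or_eq with hlt | heq
  · exact absurd ⟨α, α, hlt, hlt, rfl⟩ h
  · exact ⟨α, α, heq, heq, rfl⟩

/-- q(z₁,z₂) = 4 z₂ − z₁² is Γ-distinguished, with (0,0) in its zero set inside 𝔾₂;
moreover if (α+β)² = 4αβ then α = β. -/
theorem stmt3 :
    ((0 : ℂ), (0 : ℂ)) ∈ Zset (4 * MvPolynomial.X 1 - MvPolynomial.X 0 ^ 2) ∩ G2 ∧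
    GammaDistinguished (4 * MvPolynomial.X 1 - MvPolynomial.X 0 ^ 2) ∧
    (∀ α β : ℂ, (α + β) ^ 2 = 4 * (α * β) → α = β) := by
  have hzero : ((0 : ℂ), (0 : ℂ)) ∈ Zset (4 * X 1 - X 0 ^ 2) ∩ G2 :=
    ⟨(mem_Zset_four_X_one_sub_X_zero_sq_iff _).mpr (by simp), zero_mem_G2⟩
  refine ⟨hzero, ⟨⟨_, hzero⟩, ?_⟩, fun α β => eq_of_add_sq_eq_four_mul⟩
  rintro _ ⟨hz, ⟨α, β, hα, -, rfl⟩, hnot⟩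
  obtain rfl : α = β :=
    eq_of_add_sq_eq_four_mul ((mem_Zset_four_X_one_sub_X_zero_sq_iff _).mp hz)
  exact mem_bGamma_of_diag_notMem_G2 hα hnot
end
end

section
/- Let A be an n×n matrix with spectral radius r(A) = 1 (so there is an eigenvalue λ of A with |λ| = 1). If f ∈ ℂ[z₁,z₂] satisfies f(A, 0) = 0 (where f(A,0) means substituting A for z₁ and the zero matrix for z₂), then f(λ, 0) = 0. Consequently, if f is Γ-distinguished then (λ, 0) ∈ bΓ, which is impossible since |0| ≠ 1; hence if (A,0) is annihilated by a Γ-distinguished polynomial and ω(A) ≤ 1, then r(A) < 1. -/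
noncomputable section

/-- Evaluation of a two-variable polynomial on a pair of commuting elements. -/
def opEval2 {A : Type*} [Ring A] [Algebra ℂ A] (p : MvPolynomial (Fin 2) ℂ) (S P : A) : A :=
  p.support.sum fun m => (MvPolynomial.coeff m p) • (S ^ (m 0) * P ^ (m 1))

/-- Numerical radius of an n×n complex matrix. -/
def numRadius {n : ℕ} (A : Matrix (Fin n) (Fin n) ℂ) : ℝ :=
  sSup {r : ℝ | ∃ x : EuclideanSpace ℂ (Fin n), ‖x‖ = 1 ∧
    r = ‖(inner ℂ x (Matrix.toEuclideanLin A x) : ℂ)‖}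

/-! `f(A, 0)` is `q(A)` for the one-variable polynomial `q = f(z, 0)`, so by the spectral
mapping theorem every eigenvalue `λ` of `A` is a root of `q`, i.e. `f(λ, 0) = 0`. When `|λ| = 1`
the point `(λ, 0)` lies in `Γ \ 𝔾₂`, so a Γ-distinguished `f` would force `(λ, 0) ∈ bΓ`, which is
impossible since points of `bΓ` have second coordinate of modulus one. Eigenvalues lie in the
numerical range, so `ω(A) ≤ 1` gives `|λ| ≤ 1`, hence `|λ| < 1` on the (finite) spectrum. -/

open Polynomial

/-- The one-variable polynomial `f(z, 0)`. -/
def zeroSlice (f : MvPolynomial (Fin 2) ℂ) : ℂ[X] :=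
  MvPolynomial.aeval ![X, 0] f

lemma aeval_zeroSlice {B : Type*} [Ring B] [Algebra ℂ B] (f : MvPolynomial (Fin 2) ℂ) (S : B) :
    aeval S (zeroSlice f) = opEval2 f S 0 := by
  rw [zeroSlice, MvPolynomial.aeval_def, MvPolynomial.eval₂_eq', map_sum, opEval2]
  refine Finset.sum_congr rfl fun m _ => ?_
  simp [Fin.prod_univ_two, Algebra.smul_def]

lemma eval_zeroSlice (f : MvPolynomial (Fin 2) ℂ) (μ : ℂ) :
    (zeroSlice f).eval μ = MvPolynomial.eval ![μ, 0] f := by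
  have hvals : (fun i => aeval μ ((![X, 0] : Fin 2 → ℂ[X]) i)) = ![μ, 0] := by
    ext i
    fin_cases i <;> simp
  rw [← coe_aeval_eq_eval, zeroSlice, MvPolynomial.comp_aeval_apply, hvals]
  rfl

lemma eval_eq_zero_of_aeval_eq_zero_of_mem_spectrum {𝕜 A : Type*} [Field 𝕜] [Ring A]
    [Algebra 𝕜 A] {a : A} {p : 𝕜[X]} (hp : aeval a p = 0) {μ : 𝕜} (hμ : μ ∈ spectrum 𝕜 a) :
    p.eval μ = 0 := by
  have h := spectrum.subset_polynomial_aeval a p ⟨μ, hμ, rfl⟩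
  rw [hp, spectrum.mem_iff, sub_zero] at h
  by_contra hne
  exact h ((Ne.isUnit hne).map _)

lemma mk_zero_mem_GammaSet_diff_G2 {μ : ℂ} (hμ : ‖μ‖ = 1) : (μ, 0) ∈ GammaSet \ G2 := by
  refine ⟨⟨μ, 0, hμ.le, by simp, by simp⟩, ?_⟩
  rintro ⟨z₁, z₂, hz₁, hz₂, heq⟩
  obtain ⟨rfl, hz⟩ := Prod.ext_iff.mp heq
  rcases mul_eq_zero.mp hz.symm with rfl | rfl
  · simp [hz₂.ne] at hμ
  · simp [hz₁.ne] at hμ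

lemma norm_snd_of_mem_bGamma {w : ℂ × ℂ} (hw : w ∈ bGamma) : ‖w.2‖ = 1 := by
  obtain ⟨z₁, z₂, hz₁, hz₂, rfl⟩ := hw
  simp [hz₁, hz₂]

lemma Module.End.HasEigenvalue.exists_norm_eq_one_inner_apply_eq {𝕜 E : Type*} [RCLike 𝕜]
    [NormedAddCommGroup E] [InnerProductSpace 𝕜 E] {T : Module.End 𝕜 E} {μ : 𝕜}
    (h : T.HasEigenvalue μ) : ∃ x : E, ‖x‖ = 1 ∧ inner 𝕜 x (T x) = μ := by
  obtain ⟨v, hv⟩ := h.exists_hasEigenvector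
  have hv0 : ‖v‖ ≠ 0 := norm_ne_zero_iff.mpr hv.2
  refine ⟨(‖v‖⁻¹ : 𝕜) • v, by simp [norm_smul, hv0], ?_⟩
  rw [map_smul, hv.apply_eq_smul, inner_smul_left, inner_smul_right, inner_smul_right,
    inner_self_eq_norm_sq_to_K, map_inv₀, RCLike.conj_ofReal]
  field_simp [RCLike.ofReal_ne_zero.2 hv0]

lemma bddAbove_numericalRange {n : ℕ} (A : Matrix (Fin n) (Fin n) ℂ) :
    BddAbove {r : ℝ | ∃ x : EuclideanSpace ℂ (Fin n), ‖x‖ = 1 ∧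
      r = ‖(inner ℂ x (Matrix.toEuclideanLin A x) : ℂ)‖} := by
  refine ⟨‖Matrix.toEuclideanCLM (𝕜 := ℂ) A‖, ?_⟩
  rintro r ⟨x, hx, rfl⟩
  calc ‖(inner ℂ x (Matrix.toEuclideanLin A x) : ℂ)‖
      ≤ ‖x‖ * ‖Matrix.toEuclideanCLM (𝕜 := ℂ) A x‖ := norm_inner_le_norm _ _
    _ ≤ ‖Matrix.toEuclideanCLM (𝕜 := ℂ) A‖ := by
      simpa [hx] using (Matrix.toEuclideanCLM (𝕜 := ℂ) A).le_opNorm x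

lemma norm_le_numRadius_of_mem_spectrum {n : ℕ} {A : Matrix (Fin n) (Fin n) ℂ} {μ : ℂ}
    (hμ : μ ∈ spectrum ℂ A) : ‖μ‖ ≤ numRadius A := by
  rw [← Matrix.spectrum_toLpLin 2, ← Module.End.hasEigenvalue_iff_mem_spectrum] at hμ
  obtain ⟨x, hx, hxμ⟩ := hμ.exists_norm_eq_one_inner_apply_eq
  exact le_csSup (bddAbove_numericalRange A) ⟨x, hx, by rw [← hxμ]⟩

lemma spectralRadius_lt_of_finite {𝕜 A : Type*} [NormedField 𝕜] [Ring A] [Algebra 𝕜 A] {a : A}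
    (hfin : (spectrum 𝕜 a).Finite) {r : NNReal} (hr0 : 0 < r)
    (hr : ∀ k ∈ spectrum 𝕜 a, ‖k‖₊ < r) : spectralRadius 𝕜 a < r := by
  obtain ⟨t, ht⟩ := hfin.exists_finset_coe
  simp only [spectralRadius, ← ht, Finset.mem_coe]
  rw [← Finset.sup_eq_iSup]
  exact (Finset.sup_lt_iff (by simpa using hr0)).2 fun k hk =>
    ENNReal.coe_lt_coe.2 (hr k (ht ▸ hk))

theorem stmt6 {n : ℕ} (A : Matrix (Fin n) (Fin n) ℂ)
    (f : MvPolynomial (Fin 2) ℂ) (hf : opEval2 f A 0 = 0) :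
    (∀ μ ∈ spectrum ℂ A, ‖μ‖ = 1 →
      MvPolynomial.eval ![μ, 0] f = 0 ∧ (GammaDistinguished f → (μ, (0 : ℂ)) ∈ bGamma)) ∧
    (GammaDistinguished f → numRadius A ≤ 1 → spectralRadius ℂ A < 1) := by
  have hroot : ∀ μ ∈ spectrum ℂ A, MvPolynomial.eval ![μ, 0] f = 0 := fun μ hμ => by
    rw [← eval_zeroSlice]
    exact eval_eq_zero_of_aeval_eq_zero_of_mem_spectrum ((aeval_zeroSlice f A).trans hf) hμ
  have hbd : ∀ μ ∈ spectrum ℂ A, ‖μ‖ = 1 → GammaDistinguished f → (μ, (0 : ℂ)) ∈ bGamma :=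
    fun μ hμ h1 hd => hd.2 ⟨hroot μ hμ, mk_zero_mem_GammaSet_diff_G2 h1⟩
  refine ⟨fun μ hμ h1 => ⟨hroot μ hμ, hbd μ hμ h1⟩, fun hd hω => ?_⟩
  refine spectralRadius_lt_of_finite A.finite_spectrum one_pos fun μ hμ => ?_
  have hne : ‖μ‖ ≠ 1 := fun h1 => by
    simpa using norm_snd_of_mem_bGamma (hbd μ hμ h1 hd)
  have hle : ‖μ‖ ≤ 1 := (norm_le_numRadius_of_mem_spectrum hμ).trans hω
  exact_mod_cast hle.lt_of_ne hne
end
end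

section
/- The 3×3 matrix A = [[0,2,0],[0,0,0],[0,0,1]] has numerical radius ω(A) = 1, and the pair (A, 0) (with 0 the zero operator) is not annihilated by any Γ-distinguished polynomial: if q(A,0) = 0 for q ∈ ℂ[z₁,z₂], then q(1,0) = 0 since 1 ∈ σ(A), and (1,0) ∈ ∂Γ but (1,0) ∉ bΓ, contradicting Γ-distinguishedness of q. -/
open Matrix

noncomputable section

/-!
The vector `e₃ = ![0, 0, 1]` is a common eigenvector of `A` (eigenvalue `1`) and of `0`
(eigenvalue `0`), so `q(A, 0) e₃ = q(1, 0) e₃` for every polynomial `q`. Hence an annihilating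
`q` vanishes at `(1, 0) = π(1, 0)`, a point of `∂Γ` outside `bΓ`, which a `Γ`-distinguished
polynomial cannot do. For the numerical radius, `⟨Ax, x⟩ = 2 x₁ x̄₀ + |x₂|²`, bounded by `‖x‖²`
since `2|x₀||x₁| ≤ |x₀|² + |x₁|²`, with equality at `e₃`.
-/

namespace Matrix

variable {n R : Type*} [Fintype n] [DecidableEq n]

theorem pow_mulVec_of_mulVec_eq_smul [CommRing R] {S : Matrix n n R} {v : n → R} {μ : R}
    (hv : S *ᵥ v = μ • v) (k : ℕ) : (S ^ k) *ᵥ v = μ ^ k • v := by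
  induction k with
  | zero => simp
  | succ k ih => rw [pow_succ', ← mulVec_mulVec, ih, mulVec_smul, hv, smul_smul, pow_succ]

theorem mem_spectrum_of_mulVec_eq_smul [Field R] {S : Matrix n n R} {v : n → R} {μ : R}
    (hv₀ : v ≠ 0) (hv : S *ᵥ v = μ • v) : μ ∈ spectrum R S :=
  spectrum_toLin' S ▸ Module.End.HasEigenvalue.mem_spectrum
    (Module.End.hasEigenvalue_of_hasEigenvector ⟨Module.End.mem_eigenspace_iff.mpr hv, hv₀⟩)

end Matrix

section JointEigenvector

open Matrix

variable {n : Type*} [Fintype n] [DecidableEq n] {S P : Matrix n n ℂ} {v : n → ℂ} {μ ν : ℂ}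

theorem opEval2_mulVec_of_mulVec_eq_smul (q : MvPolynomial (Fin 2) ℂ)
    (hS : S *ᵥ v = μ • v) (hP : P *ᵥ v = ν • v) :
    opEval2 q S P *ᵥ v = MvPolynomial.eval ![μ, ν] q • v := by
  simp only [opEval2, sum_mulVec, smul_mulVec, ← mulVec_mulVec,
    pow_mulVec_of_mulVec_eq_smul hS, pow_mulVec_of_mulVec_eq_smul hP, mulVec_smul,
    MvPolynomial.eval_eq', Fin.prod_univ_two, Finset.sum_smul, smul_smul]
  simp [mul_comm]

theorem eval_eq_zero_of_opEval2_eq_zero {q : MvPolynomial (Fin 2) ℂ} (hq : opEval2 q S P = 0)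
    (hv₀ : v ≠ 0) (hS : S *ᵥ v = μ • v) (hP : P *ᵥ v = ν • v) :
    MvPolynomial.eval ![μ, ν] q = 0 := by
  have h := opEval2_mulVec_of_mulVec_eq_smul q hS hP
  rw [hq, zero_mulVec, eq_comm, smul_eq_zero] at h
  exact h.resolve_right hv₀

end JointEigenvector

theorem mk_zero_eq_add_mul_iff {z z₁ z₂ : ℂ} :
    (z, 0) = (z₁ + z₂, z₁ * z₂) ↔ (z₁ = z ∧ z₂ = 0) ∨ (z₁ = 0 ∧ z₂ = z) := by
  simp only [Prod.mk.injEq, eq_comm (a := (0 : ℂ)), mul_eq_zero]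
  constructor
  · rintro ⟨rfl, h | h⟩ <;> simp [h]
  · rintro (⟨rfl, rfl⟩ | ⟨rfl, rfl⟩) <;> simp

theorem mk_zero_mem_gammaSet_iff {z : ℂ} : (z, 0) ∈ GammaSet ↔ ‖z‖ ≤ 1 := by
  simp only [GammaSet, Set.mem_ofPred_eq, mk_zero_eq_add_mul_iff]
  constructor
  · rintro ⟨z₁, z₂, h₁, h₂, ⟨rfl, -⟩ | ⟨-, rfl⟩⟩ <;> assumption
  · exact fun hz => ⟨z, 0, hz, by simp, .inl ⟨rfl, rfl⟩⟩

theorem mk_zero_mem_G2_iff {z : ℂ} : (z, 0) ∈ G2 ↔ ‖z‖ < 1 := by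
  simp only [G2, Set.mem_ofPred_eq, mk_zero_eq_add_mul_iff]
  constructor
  · rintro ⟨z₁, z₂, h₁, h₂, ⟨rfl, -⟩ | ⟨-, rfl⟩⟩ <;> assumption
  · exact fun hz => ⟨z, 0, hz, by simp, .inl ⟨rfl, rfl⟩⟩

theorem mk_zero_notMem_bGamma (z : ℂ) : (z, 0) ∉ bGamma := by
  rintro ⟨z₁, z₂, h₁, h₂, h⟩
  rcases mk_zero_eq_add_mul_iff.mp h with ⟨-, rfl⟩ | ⟨rfl, -⟩ <;> simp at h₁ h₂

theorem mk_zero_mem_gammaSet_diff_G2 {z : ℂ} (hz : ‖z‖ = 1) : (z, 0) ∈ GammaSet \ G2 :=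
  ⟨mk_zero_mem_gammaSet_iff.mpr hz.le, fun h => (mk_zero_mem_G2_iff.mp h).ne hz⟩

theorem GammaDistinguished.eval_ne_zero {q : MvPolynomial (Fin 2) ℂ} (hq : GammaDistinguished q)
    {z : ℂ} (hz : ‖z‖ = 1) : MvPolynomial.eval ![z, 0] q ≠ 0 := fun h =>
  mk_zero_notMem_bGamma z (hq.2 ⟨h, mk_zero_mem_gammaSet_diff_G2 hz⟩)

theorem inner_toEuclideanLin_self (x : EuclideanSpace ℂ (Fin 3)) :
    (inner ℂ x (toEuclideanLin !![(0 : ℂ), 2, 0; 0, 0, 0; 0, 0, 1] x) : ℂ) =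
      2 * x 1 * star (x 0) + x 2 * star (x 2) := by
  rw [EuclideanSpace.inner_eq_star_dotProduct]
  simp [toEuclideanLin, dotProduct, mulVec, Fin.sum_univ_three]

theorem norm_inner_toEuclideanLin_self_le (x : EuclideanSpace ℂ (Fin 3)) :
    ‖(inner ℂ x (toEuclideanLin !![(0 : ℂ), 2, 0; 0, 0, 0; 0, 0, 1] x) : ℂ)‖ ≤ ‖x‖ ^ 2 := by
  rw [inner_toEuclideanLin_self, EuclideanSpace.norm_sq_eq, Fin.sum_univ_three]
  calc ‖2 * x 1 * star (x 0) + x 2 * star (x 2)‖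
      ≤ 2 * (‖x 0‖ * ‖x 1‖) + ‖x 2‖ ^ 2 := by
        refine (norm_add_le _ _).trans_eq ?_
        simp only [norm_mul, norm_star, Complex.norm_ofNat]
        ring
    _ ≤ ‖x 0‖ ^ 2 + ‖x 1‖ ^ 2 + ‖x 2‖ ^ 2 := by
        nlinarith [two_mul_le_add_sq ‖x 0‖ ‖x 1‖]

theorem numRadius_eq_one : numRadius !![(0 : ℂ), 2, 0; 0, 0, 0; 0, 0, 1] = 1 := by
  refine IsGreatest.csSup_eq ⟨⟨EuclideanSpace.single 2 1, by simp, ?_⟩, ?_⟩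
  · simp [inner_toEuclideanLin_self]
  · rintro r ⟨x, hx, rfl⟩
    simpa [hx] using norm_inner_toEuclideanLin_self_le x

/-- The matrix A = [[0,2,0],[0,0,0],[0,0,1]] has numerical radius 1, 1 ∈ σ(A),
(1,0) ∈ ∂Γ \ bΓ, every polynomial annihilating (A,0) vanishes at (1,0), and
(A,0) is not annihilated by any Γ-distinguished polynomial. -/
theorem stmt7 :
    numRadius !![(0 : ℂ), 2, 0; 0, 0, 0; 0, 0, 1] = 1 ∧
    (1 : ℂ) ∈ spectrum ℂ !![(0 : ℂ), 2, 0; 0, 0, 0; 0, 0, 1] ∧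
    ((1 : ℂ), (0 : ℂ)) ∈ GammaSet \ G2 ∧
    ((1 : ℂ), (0 : ℂ)) ∉ bGamma ∧
    (∀ q : MvPolynomial (Fin 2) ℂ,
      opEval2 q !![(0 : ℂ), 2, 0; 0, 0, 0; 0, 0, 1] 0 = 0 →
        MvPolynomial.eval ![(1 : ℂ), 0] q = 0 ∧ ¬ GammaDistinguished q) := by
  have he₃ : !![(0 : ℂ), 2, 0; 0, 0, 0; 0, 0, 1] *ᵥ ![0, 0, 1] = (1 : ℂ) • ![0, 0, 1] := by
    ext i; fin_cases i <;> simp [mulVec, dotProduct, Fin.sum_univ_three]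
  have he₃_ne : (![0, 0, 1] : Fin 3 → ℂ) ≠ 0 := fun h => by simpa using congrFun h 2
  have he₃_zero : (0 : Matrix (Fin 3) (Fin 3) ℂ) *ᵥ ![0, 0, 1] = (0 : ℂ) • ![0, 0, 1] := by simp
  refine ⟨numRadius_eq_one, mem_spectrum_of_mulVec_eq_smul he₃_ne he₃,
    mk_zero_mem_gammaSet_diff_G2 norm_one, mk_zero_notMem_bGamma 1, fun q hq => ?_⟩
  have hq₁ := eval_eq_zero_of_opEval2_eq_zero hq he₃_ne he₃ he₃_zero
  exact ⟨hq₁, fun hd => hd.eval_ne_zero norm_one hq₁⟩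
end
end

section
/- A hyponormal operator annihilated by a nonzero polynomial is normal: if T is a bounded operator with T*T − TT* ≥ 0 and p(T) = 0 for some nonzero p ∈ ℂ[z], then T*T = TT*. -/
/-!
Hyponormality is positivity of the self-commutator `T† T - T T†`, which does not change when `T`
is replaced by `T - μ`. A hyponormal `S` satisfies `ker S ⊆ ker S†`, hence `ker S² = ker S`: if
`S² x = 0` then `S† S x = 0`, so `‖S x‖² = ⟪S† S x, x⟫ = 0`. Applied to `T - μ`, every generalized
eigenvector of `T` is an eigenvector, on which `T†` acts by `conj μ`, so the self-commutator
vanishes on it. Finally `p(T) = 0` and the factorisation of `p` into pairwise coprime powers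
`(X - μ)ᵏ` make `H` the sum of the generalized eigenspaces of `T`.
-/

open Function Polynomial ContinuousLinearMap RCLike ComplexConjugate

theorem Polynomial.ker_aeval_prod_eq_iSup_ker {R M ι : Type*} [CommRing R] [AddCommGroup M]
    [Module R M] (f : Module.End R M) (s : Finset ι) (q : ι → R[X])
    (hq : (s : Set ι).Pairwise (IsCoprime on q)) :
    LinearMap.ker (aeval f (∏ i ∈ s, q i)) = ⨆ i ∈ s, LinearMap.ker (aeval f (q i)) := by
  classical
  induction s using Finset.induction_on with
  | empty => simp [Module.End.one_eq_id]
  | @insert i s hi ih =>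
    rw [Finset.coe_insert, Set.pairwise_insert] at hq
    have hcop : IsCoprime (q i) (∏ j ∈ s, q j) :=
      IsCoprime.prod_right fun j hj => (hq.2 j hj (ne_of_mem_of_not_mem hj hi).symm).1
    rw [Finset.prod_insert hi, ← sup_ker_aeval_eq_ker_aeval_mul_of_coprime f hcop, ih hq.1,
      Finset.iSup_insert]

theorem Polynomial.aeval_prod_multiset_X_sub_C_roots_eq_zero {K A : Type*} [Field K]
    [IsAlgClosed K] [Ring A] [Algebra K A] {p : K[X]} (hp : p ≠ 0) {a : A} (h : aeval a p = 0) :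
    aeval a (p.roots.map (X - C ·)).prod = 0 := by
  rw [(IsAlgClosed.splits p).eq_prod_roots, map_mul, aeval_C, Algebra.algebraMap_eq_smul_one,
    smul_one_mul, smul_eq_zero] at h
  exact h.resolve_left (leadingCoeff_ne_zero.mpr hp)

theorem Module.End.iSup_maxGenEigenspace_eq_top_of_aeval_eq_zero {K M : Type*} [Field K]
    [IsAlgClosed K] [AddCommGroup M] [Module K M] {f : Module.End K M} {p : K[X]} (hp : p ≠ 0)
    (h : aeval f p = 0) : ⨆ μ, f.maxGenEigenspace μ = ⊤ := by
  classical
  have hcop : (p.roots.toFinset : Set K).Pairwise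
      (IsCoprime on fun μ => (X - C μ) ^ p.roots.count μ) :=
    fun μ _ ν _ hμν => (pairwise_coprime_X_sub_C injective_id hμν).pow
  rw [eq_top_iff, ← (LinearMap.ker_zero : LinearMap.ker (0 : Module.End K M) = ⊤),
    ← aeval_prod_multiset_X_sub_C_roots_eq_zero hp h, Finset.prod_multiset_map_count,
    ker_aeval_prod_eq_iSup_ker f _ _ hcop]
  refine iSup₂_le fun μ _ => le_iSup_of_le μ ?_
  rw [map_pow, map_sub, aeval_X, aeval_C, Algebra.algebraMap_eq_smul_one, ← genEigenspace_nat]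
  exact (f.genEigenspace μ).monotone le_top

theorem ContinuousLinearMap.toLinearMap_aeval {R M : Type*} [CommRing R] [TopologicalSpace M]
    [AddCommGroup M] [Module R M] [IsTopologicalAddGroup M] [ContinuousConstSMul R M]
    (T : M →L[R] M) (q : R[X]) :
    ((aeval T q : M →L[R] M) : M →ₗ[R] M) = aeval (T : M →ₗ[R] M) q :=
  (aeval_algHom_apply ({ toLinearMapRingHom with commutes' := fun _ => rfl } :
    (M →L[R] M) →ₐ[R] M →ₗ[R] M) T q).symm

theorem star_mul_sub_mul_star_sub_algebraMap {R A : Type*} [CommSemiring R] [StarRing R]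
    [Ring A] [StarRing A] [Algebra R A] [StarModule R A] (a : A) (r : R) :
    star (a - algebraMap R A r) * (a - algebraMap R A r)
      - (a - algebraMap R A r) * star (a - algebraMap R A r) = star a * a - a * star a := by
  rw [star_sub, ← algebraMap_star_comm]
  simp only [sub_mul, mul_sub, Algebra.commutes r (star a), Algebra.commutes (star r) a,
    ← map_mul, mul_comm (star r)]
  abel

section Hyponormal

variable {H : Type*} [NormedAddCommGroup H] [InnerProductSpace ℂ H] [CompleteSpace H]

def IsHyponormal (T : H →L[ℂ] H) : Prop :=
  ∀ x, ‖adjoint T x‖ ≤ ‖T x‖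

theorem isHyponormal_iff_re_inner_commutator_nonneg {T : H →L[ℂ] H} :
    IsHyponormal T ↔ ∀ x, 0 ≤ re (inner ℂ ((adjoint T * T - T * adjoint T) x) x) := by
  refine forall_congr' fun x => ?_
  have hT := apply_norm_sq_eq_inner_adjoint_left T x
  have hT' := apply_norm_sq_eq_inner_adjoint_left (adjoint T) x
  rw [adjoint_adjoint] at hT'
  rw [sub_apply, inner_sub_left, map_sub, sub_nonneg, ← pow_le_pow_iff_left₀ (norm_nonneg _)
    (norm_nonneg _) two_ne_zero, hT, hT']
  rfl

namespace IsHyponormal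

variable {T : H →L[ℂ] H}

theorem sub_smul_one (hT : IsHyponormal T) (μ : ℂ) : IsHyponormal (T - μ • 1) := by
  rw [isHyponormal_iff_re_inner_commutator_nonneg] at hT ⊢
  simpa only [← star_eq_adjoint, ← Algebra.algebraMap_eq_smul_one,
    star_mul_sub_mul_star_sub_algebraMap] using hT

theorem adjoint_apply_eq_zero (hT : IsHyponormal T) {x : H} (hx : T x = 0) : adjoint T x = 0 :=
  norm_le_zero_iff.mp (by simpa [hx] using hT x)

theorem apply_eq_zero_of_apply_apply_eq_zero (hT : IsHyponormal T) {x : H} (hx : T (T x) = 0) :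
    T x = 0 := by
  rw [← inner_self_eq_zero (𝕜 := ℂ), ← adjoint_inner_right, hT.adjoint_apply_eq_zero hx,
    inner_zero_right]

theorem apply_eq_zero_of_pow_apply_eq_zero (hT : IsHyponormal T) :
    ∀ {n : ℕ} {x : H}, (T ^ n) x = 0 → T x = 0
  | 0, x, hx => by rw [pow_zero, one_apply_eq_self] at hx; rw [hx, map_zero]
  | 1, x, hx => by rwa [pow_one] at hx
  | n + 2, x, hx => by
    rw [pow_succ', pow_succ', mul_apply_eq_comp, mul_apply_eq_comp] at hx
    exact hT.apply_eq_zero_of_pow_apply_eq_zero (n := n + 1) <| by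
      rw [pow_succ', mul_apply_eq_comp]
      exact hT.apply_eq_zero_of_apply_apply_eq_zero hx

theorem adjoint_apply_eq_of_apply_eq (hT : IsHyponormal T) {μ : ℂ} {x : H} (hx : T x = μ • x) :
    adjoint T x = conj μ • x := by
  have h := (hT.sub_smul_one μ).adjoint_apply_eq_zero (x := x) (by simp [hx])
  rwa [← star_eq_adjoint, ← Algebra.algebraMap_eq_smul_one, star_sub, ← algebraMap_star_comm,
    star_eq_adjoint, sub_apply, Algebra.algebraMap_eq_smul_one, smul_apply, one_apply_eq_self,
    sub_eq_zero] at h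

theorem commutator_apply_eq_zero_of_apply_eq (hT : IsHyponormal T) {μ : ℂ} {x : H}
    (hx : T x = μ • x) : (adjoint T * T - T * adjoint T) x = 0 := by
  simp [hx, hT.adjoint_apply_eq_of_apply_eq hx, smul_smul, mul_comm]

theorem maxGenEigenspace_le_ker_commutator (hT : IsHyponormal T) (μ : ℂ) :
    Module.End.maxGenEigenspace (T : H →ₗ[ℂ] H) μ
      ≤ LinearMap.ker ((adjoint T * T - T * adjoint T : H →L[ℂ] H) : H →ₗ[ℂ] H) := by
  intro x hx
  obtain ⟨k, hk⟩ := (Module.End.mem_maxGenEigenspace _ _ _).mp hx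
  rw [← toLinearMap_one, ← toLinearMap_smul, ← toLinearMap_sub, ← toLinearMap_pow, coe_coe] at hk
  have hTx : T x = μ • x := by
    simpa [sub_eq_zero] using (hT.sub_smul_one μ).apply_eq_zero_of_pow_apply_eq_zero hk
  exact hT.commutator_apply_eq_zero_of_apply_eq hTx

end IsHyponormal

end Hyponormal

/-- A hyponormal operator annihilated by a nonzero polynomial is normal. -/
theorem stmt17 {H : Type*} [NormedAddCommGroup H] [InnerProductSpace ℂ H] [CompleteSpace H]
    (T : H →L[ℂ] H)
    (hhypo : ∀ x : H, ‖(ContinuousLinearMap.adjoint T) x‖ ≤ ‖T x‖)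
    (p : Polynomial ℂ) (hp : p ≠ 0) (hann : Polynomial.aeval T p = 0) :
    (ContinuousLinearMap.adjoint T) * T = T * (ContinuousLinearMap.adjoint T) := by
  have hT : IsHyponormal T := hhypo
  have hker : LinearMap.ker ((adjoint T * T - T * adjoint T : H →L[ℂ] H) : H →ₗ[ℂ] H) = ⊤ := by
    rw [eq_top_iff, ← Module.End.iSup_maxGenEigenspace_eq_top_of_aeval_eq_zero hp
      (f := (T : H →ₗ[ℂ] H)) (by rw [← toLinearMap_aeval, hann]; rfl)]
    exact iSup_le hT.maxGenEigenspace_le_ker_commutator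
  exact sub_eq_zero.mp (coe_injective (LinearMap.ker_eq_top.mp hker))
end

section
/- Let A be a normal operator on a Hilbert space annihilated by p(z) = (ᾱ₁ − z)(ᾱ₂ − z)⋯(ᾱ_m − z). Set X_j = ᾱ_j·I − A and Y_j = X_j* = α_j·I − A*. Then for every choice Q_j ∈ {X_j, Y_j} (j = 1,…,m), the product Q₁Q₂⋯Q_m = 0. -/
noncomputable section

open ContinuousLinearMap

private lemma star_list_prod {R : Type*} [Monoid R] [StarMul R] (l : List R) :
    star l.prod = (l.map star).reverse.prod := by
  induction l with
  | nil => simp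
  | cons a t ih => simp [star_mul, ih]

/-- zip-product lemma for commuting families -/
private lemma prod_mul_prod_ofFn {R : Type*} [Monoid R] :
    ∀ {m : ℕ} (f g : Fin m → R), (∀ i j, Commute (g i) (f j)) →
      (List.ofFn f).prod * (List.ofFn g).prod = (List.ofFn fun i => f i * g i).prod := by
  intro m
  induction m with
  | zero => intro f g _; simp
  | succ n ih =>
    intro f g hc
    have hcomm : Commute (g 0) (List.ofFn fun i : Fin n => f i.succ).prod :=
      Commute.list_prod_right _ _ (by
        intro x hx
        rw [List.mem_ofFn] at hx
        obtain ⟨i, rfl⟩ := hx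
        exact hc 0 i.succ)
    rw [List.ofFn_succ, List.ofFn_succ, List.ofFn_succ, List.prod_cons, List.prod_cons,
      List.prod_cons, ← ih _ _ (fun i j => hc i.succ j.succ)]
    rw [mul_assoc, ← mul_assoc _ (g 0) _, ← hcomm.eq, mul_assoc, ← mul_assoc, ← mul_assoc]

/-- If A is normal and (ᾱ₁I − A)⋯(ᾱ_mI − A) = 0, then any product Q₁⋯Q_m with each
Q_j ∈ {ᾱ_jI − A, α_jI − A*} vanishes. -/
theorem stmt18 {H : Type*} [NormedAddCommGroup H] [InnerProductSpace ℂ H] [CompleteSpace H]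
    (A : H →L[ℂ] H)
    (hA : (adjoint A) * A = A * (adjoint A))
    (m : ℕ) (α : Fin m → ℂ)
    (hp : (List.ofFn fun j : Fin m => (starRingEnd ℂ) (α j) • (1 : H →L[ℂ] H) - A).prod = 0)
    (Q : Fin m → (H →L[ℂ] H))
    (hQ : ∀ j : Fin m, Q j = (starRingEnd ℂ) (α j) • (1 : H →L[ℂ] H) - A ∨
      Q j = (α j) • (1 : H →L[ℂ] H) - adjoint A) :
    (List.ofFn Q).prod = 0 := by
  set X : Fin m → (H →L[ℂ] H) := fun j => (starRingEnd ℂ) (α j) • (1 : H →L[ℂ] H) - A with hX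
  set Y : Fin m → (H →L[ℂ] H) := fun j => (α j) • (1 : H →L[ℂ] H) - adjoint A with hY
  have hQ' : ∀ j : Fin m, Q j = X j ∨ Q j = Y j := hQ
  -- basic commutation facts
  have hAA : Commute A (adjoint A) := hA.symm
  have haux : ∀ (a b : ℂ) (S T : H →L[ℂ] H), Commute S T →
      Commute (a • (1 : H →L[ℂ] H) - S) (b • (1 : H →L[ℂ] H) - T) := by
    intro a b S T h
    have h1 : ∀ (c : ℂ) (T' : H →L[ℂ] H), Commute (c • (1 : H →L[ℂ] H)) T' :=
      fun c T' => (Commute.one_left T').smul_left c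
    exact (h1 a _).sub_left (((h1 b S).symm).sub_right h)
  have hXX : ∀ i j : Fin m, Commute (X i) (X j) := fun i j =>
    haux _ _ _ _ (Commute.refl A)
  have hXY : ∀ i j : Fin m, Commute (X i) (Y j) := fun i j => haux _ _ _ _ hAA
  have hYX : ∀ i j : Fin m, Commute (Y i) (X j) := fun i j => (hXY j i).symm
  have hYY : ∀ i j : Fin m, Commute (Y i) (Y j) := fun i j =>
    haux _ _ _ _ (Commute.refl (adjoint A))
  -- star facts
  have hstarX : ∀ j, star (X j) = Y j := by
    intro j
    show star ((starRingEnd ℂ) (α j) • (1 : H →L[ℂ] H) - A) = _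
    rw [star_sub, star_smul, star_one, star_eq_adjoint]
    congr 1
    rw [Complex.star_def, Complex.conj_conj]
  have hstarY : ∀ j, star (Y j) = X j := by
    intro j
    rw [← hstarX j, star_star]
  have hQmul : ∀ j, Q j * star (Q j) = X j * Y j := by
    intro j
    rcases hQ' j with hj | hj
    · rw [hj, hstarX j]
    · rw [hj, hstarY j]
      exact (hYX j j).eq
  have hstarQcomm : ∀ i j, Commute (star (Q i)) (Q j) := by
    intro i j
    rcases hQ' i with hi | hi <;> rcases hQ' j with hj | hj <;> rw [hi, hj]
    · rw [hstarX]; exact hYX i j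
    · rw [hstarX]; exact hYY i j
    · rw [hstarY]; exact hXX i j
    · rw [hstarY]; exact hXY i j
  -- B * star B = ∏ (X j * Y j)
  set B := (List.ofFn Q).prod with hB
  have hstarB : star B = (List.ofFn fun j => star (Q j)).prod := by
    rw [hB, star_list_prod, List.map_ofFn]
    refine List.Perm.prod_eq' (List.reverse_perm _) ?_
    rw [List.pairwise_reverse, List.pairwise_ofFn]
    intro i j _
    simp only [Function.comp_apply]
    show Commute (star (Q j)) (star (Q i))
    rcases hQ' i with hi | hi <;> rcases hQ' j with hj | hj <;> rw [hi, hj]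
    · exact (hXX j i).star_star
    · exact (hYX j i).star_star
    · exact (hXY j i).star_star
    · exact (hYY j i).star_star
  have key : B * star B = (List.ofFn fun j => X j * Y j).prod := by
    rw [hstarB, prod_mul_prod_ofFn Q (fun j => star (Q j)) hstarQcomm]
    simp only [hQmul]
  have hXYprod : (List.ofFn fun j => X j * Y j).prod = 0 := by
    rw [← prod_mul_prod_ofFn X Y hYX, show (List.ofFn X).prod = 0 from hp, zero_mul]
  have hzero : B * star B = 0 := by rw [key, hXYprod]
  exact (CStarRing.mul_star_self_eq_zero_iff B).mp hzero
end
end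

section
/- The polynomial p(z₁,z₂) = z₁(z₂ − 1) is Γ-distinguished but not 'distinguished': (0,0) ∈ Z(p) ∩ 𝔾₂ and Z(p) ∩ (Γ \ 𝔾₂) ⊆ bΓ, yet the point (5/2, 1) ∈ Z(p) does not belong to 𝔾₂ ∪ bΓ ∪ π(𝔼²), because the only pairs with sum 5/2 and product 1 are (2, 1/2) and (1/2, 2), neither of which lies in 𝔻² ∪ 𝕋² ∪ 𝔼². -/
noncomputable section

/-- π(𝔼²): symmetrization of pairs of points outside the closed unit disc. -/
def piE2 : Set (ℂ × ℂ) :=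
  {w | ∃ z₁ z₂ : ℂ, 1 < ‖z₁‖ ∧ 1 < ‖z₂‖ ∧ w = (z₁ + z₂, z₁ * z₂)}

/-!
On `Z(p)` the symmetrized coordinates satisfy `(z₁ + z₂)(z₁z₂ - 1) = 0`. If `z₁ + z₂ = 0` then
`|z₁| = |z₂|`, so a point of `Γ` is either in `𝔾₂` or in `bΓ`; if `z₁z₂ = 1` with both factors in
the closed disc, both lie on the circle. The point `(5/2, 1) ∈ Z(p)` is the image only of the
roots `2, 1/2` of `t² - 5t/2 + 1`, one inside and one outside the closed disc.
-/

lemma mem_Zset_X_mul_X_sub_one_iff (w : ℂ × ℂ) :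
    w ∈ Zset (MvPolynomial.X 0 * (MvPolynomial.X 1 - 1)) ↔ w.1 * (w.2 - 1) = 0 := by
  simp [Zset]

lemma zero_mem_Zset_X_mul_X_sub_one_inter_G2 :
    ((0 : ℂ), (0 : ℂ)) ∈ Zset (MvPolynomial.X 0 * (MvPolynomial.X 1 - 1)) ∩ G2 :=
  ⟨(mem_Zset_X_mul_X_sub_one_iff _).2 (by simp), 0, 0, by simp, by simp, by simp⟩

lemma mem_G2_or_mem_bGamma_of_norm_eq {z₁ z₂ : ℂ} (hle : ‖z₁‖ ≤ 1) (heq : ‖z₁‖ = ‖z₂‖) :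
    (z₁ + z₂, z₁ * z₂) ∈ G2 ∪ bGamma := by
  rcases hle.lt_or_eq with hlt | hone
  · exact Or.inl ⟨z₁, z₂, hlt, heq ▸ hlt, rfl⟩
  · exact Or.inr ⟨z₁, z₂, hone, heq ▸ hone, rfl⟩

lemma norm_eq_one_of_mul_eq_one {𝕜 : Type*} [NormedDivisionRing 𝕜] {a b : 𝕜}
    (ha : ‖a‖ ≤ 1) (hb : ‖b‖ ≤ 1) (hab : a * b = 1) : ‖a‖ = 1 := by
  have hnorm : ‖a‖ * ‖b‖ = 1 := by rw [← norm_mul, hab, norm_one]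
  nlinarith [norm_nonneg a, norm_nonneg b]

lemma mem_bGamma_of_mul_eq_one {z₁ z₂ : ℂ} (h₁ : ‖z₁‖ ≤ 1) (h₂ : ‖z₂‖ ≤ 1)
    (hprod : z₁ * z₂ = 1) : (z₁ + z₂, z₁ * z₂) ∈ bGamma :=
  ⟨z₁, z₂, norm_eq_one_of_mul_eq_one h₁ h₂ hprod,
    norm_eq_one_of_mul_eq_one h₂ h₁ (mul_comm z₁ z₂ ▸ hprod), rfl⟩

lemma gammaDistinguished_X_mul_X_sub_one :
    GammaDistinguished (MvPolynomial.X 0 * (MvPolynomial.X 1 - 1)) := by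
  refine ⟨⟨_, zero_mem_Zset_X_mul_X_sub_one_inter_G2⟩, ?_⟩
  rintro w ⟨hZ, ⟨z₁, z₂, h₁, h₂, rfl⟩, hnG⟩
  rcases mul_eq_zero.1 ((mem_Zset_X_mul_X_sub_one_iff _).1 hZ) with hsum | hprod
  · have heq : ‖z₁‖ = ‖z₂‖ := by rw [eq_neg_of_add_eq_zero_right hsum, norm_neg]
    exact (mem_G2_or_mem_bGamma_of_norm_eq h₁ heq).resolve_left hnG
  · exact mem_bGamma_of_mul_eq_one h₁ h₂ (sub_eq_zero.1 hprod)

lemma eq_two_and_half_of_add_eq_of_mul_eq {z₁ z₂ : ℂ} (hsum : z₁ + z₂ = 5 / 2)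
    (hprod : z₁ * z₂ = 1) : (z₁ = 2 ∧ z₂ = 1 / 2) ∨ (z₁ = 1 / 2 ∧ z₂ = 2) := by
  have hquad : (z₁ - 2) * (z₁ - 1 / 2) = 0 := by linear_combination z₁ * hsum - hprod
  rcases mul_eq_zero.1 hquad with h | h
  · exact Or.inl ⟨by linear_combination h, by linear_combination hsum - h⟩
  · exact Or.inr ⟨by linear_combination h, by linear_combination hsum - h⟩

lemma five_halves_one_not_mem :
    ((5 / 2 : ℂ), (1 : ℂ)) ∉ G2 ∪ bGamma ∪ piE2 := by
  have h2 : ‖(2 : ℂ)‖ = 2 := by norm_num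
  have hhalf : ‖(1 / 2 : ℂ)‖ = 1 / 2 := by norm_num
  rintro ((⟨z₁, z₂, h₁, h₂, hw⟩ | ⟨z₁, z₂, h₁, h₂, hw⟩) | ⟨z₁, z₂, h₁, h₂, hw⟩) <;>
  · obtain ⟨hsum, hprod⟩ := Prod.ext_iff.1 hw
    rcases eq_two_and_half_of_add_eq_of_mul_eq hsum.symm hprod.symm with ⟨rfl, rfl⟩ | ⟨rfl, rfl⟩ <;>
      linarith

/-- p(z₁,z₂) = z₁(z₂ − 1) is Γ-distinguished but not distinguished: the point
(5/2, 1) lies in Z(p) but not in 𝔾₂ ∪ bΓ ∪ π(𝔼²). -/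
theorem stmt19 :
    letI p : MvPolynomial (Fin 2) ℂ := MvPolynomial.X 0 * (MvPolynomial.X 1 - 1)
    GammaDistinguished p ∧
    ((0 : ℂ), (0 : ℂ)) ∈ Zset p ∩ G2 ∧
    (((5 / 2 : ℂ), (1 : ℂ)) ∈ Zset p) ∧
    (((5 / 2 : ℂ), (1 : ℂ)) ∉ G2 ∪ bGamma ∪ piE2) ∧
    ¬ (Zset p ⊆ G2 ∪ bGamma ∪ piE2) := by
  have hfive : ((5 / 2 : ℂ), (1 : ℂ)) ∈ Zset (MvPolynomial.X 0 * (MvPolynomial.X 1 - 1)) :=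
    (mem_Zset_X_mul_X_sub_one_iff _).2 (by simp)
  exact ⟨gammaDistinguished_X_mul_X_sub_one,
    zero_mem_Zset_X_mul_X_sub_one_inter_G2, hfive, five_halves_one_not_mem,
    fun hsub => five_halves_one_not_mem (hsub hfive)⟩
end
end
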